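/- arXiv:1711.10682 — 4 statements merged into one kernel-verified Lean document; each statement's English description precedes it below -/
import Mathlib

section
/- If y : [0,1] → ℝ is L-Lipschitz and y_k is its truncated Haar wavelet expansion with k = 2^{J+1} terms, then ‖y - y_k‖_{L²[0,1]} ≤ (L/√3) · (1/k). In particular the Haar approximation converges in L² with rate O(1/k). -/
/-- The Haar wavelet at level `j`, translation `k`, on `[0,1)`. -/
noncomputable def haar (j k : ℕ) (x : ℝ) : ℝ :=
  if (k : ℝ) / 2 ^ j ≤ x ∧ x < ((k : ℝ) + 1 / 2) / 2 ^ j then 1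
  else if ((k : ℝ) + 1 / 2) / 2 ^ j ≤ x ∧ x < ((k : ℝ) + 1) / 2 ^ j then -1
  else 0

/-- The L²-normalized Haar wavelet family on `[0,1]`:
`e_1 ≡ 1`, and `e_i = 2^{j/2} haar j k` for `i = 2^j + k + 1`. -/
noncomputable def nhaar (i : ℕ) (x : ℝ) : ℝ :=
  if i = 1 then (if 0 ≤ x ∧ x < 1 then 1 else 0)
  else (2 : ℝ) ^ ((Nat.log2 (i - 1) : ℝ) / 2) *
    haar (Nat.log2 (i - 1)) (i - 1 - 2 ^ Nat.log2 (i - 1)) x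

open MeasureTheory intervalIntegral Set

lemma haar_one {j k : ℕ} {x : ℝ} (h1 : (k : ℝ) / 2 ^ j ≤ x)
    (h2 : x < ((k : ℝ) + 1 / 2) / 2 ^ j) : haar j k x = 1 := by
  unfold haar; rw [if_pos ⟨h1, h2⟩]

lemma haar_neg {j k : ℕ} {x : ℝ} (h1 : ((k : ℝ) + 1 / 2) / 2 ^ j ≤ x)
    (h2 : x < ((k : ℝ) + 1) / 2 ^ j) : haar j k x = -1 := by
  unfold haar
  rw [if_neg (by rintro ⟨-, h⟩; exact absurd h (not_lt.2 h1)), if_pos ⟨h1, h2⟩]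

lemma haar_zero_left {j k : ℕ} {x : ℝ} (h : x < (k : ℝ) / 2 ^ j) : haar j k x = 0 := by
  have hp : (0:ℝ) < 2 ^ j := by positivity
  have h3 : ¬ (((k : ℝ) + 1 / 2) / 2 ^ j ≤ x) := by
    push_neg; refine h.trans_le (by gcongr; linarith)
  unfold haar
  rw [if_neg (by rintro ⟨h', -⟩; exact absurd h' (not_le.2 h)),
    if_neg (by rintro ⟨h', -⟩; exact h3 h')]

lemma haar_zero_right {j k : ℕ} {x : ℝ} (h : ((k : ℝ) + 1) / 2 ^ j ≤ x) : haar j k x = 0 := by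
  have hp : (0:ℝ) < 2 ^ j := by positivity
  have h2 : ¬ (x < ((k : ℝ) + 1 / 2) / 2 ^ j) := by
    push_neg; refine le_trans (by gcongr; linarith) h
  unfold haar
  rw [if_neg (by rintro ⟨-, h'⟩; exact h2 h'),
    if_neg (by rintro ⟨-, h'⟩; exact absurd h' (not_lt.2 h))]

lemma haar_measurable (j k : ℕ) : Measurable (haar j k) := by
  unfold haar
  refine Measurable.ite ?_ measurable_const (Measurable.ite ?_ measurable_const measurable_const)
  · exact (measurableSet_Ico : MeasurableSet (Set.Ico ((k : ℝ) / 2 ^ j) _))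
  · exact (measurableSet_Ico : MeasurableSet (Set.Ico (((k : ℝ) + 1/2) / 2 ^ j) _))

lemma haar_abs_le (j k : ℕ) (x : ℝ) : |haar j k x| ≤ 1 := by
  unfold haar
  split_ifs <;> simp

lemma ae_ne' (l : ℝ) : ∀ᵐ t : ℝ, t ≠ l := by
  filter_upwards [compl_mem_ae_iff.2 (Real.volume_singleton (a := l))] with t ht
  simpa using ht

section coeff
variable {y : ℝ → ℝ} (hc : ContinuousOn y (Icc 0 1))

include hc in
lemma y_intint {u v : ℝ} (h0 : 0 ≤ u) (huv : u ≤ v) (h1 : v ≤ 1) :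
    IntervalIntegrable y volume u v :=
  (hc.mono (by rw [uIcc_of_le huv]; exact Icc_subset_Icc h0 h1)).intervalIntegrable

include hc in
lemma yhaar_intint (J k' : ℕ) {u v : ℝ} (h0 : 0 ≤ u) (huv : u ≤ v) (h1 : v ≤ 1) :
    IntervalIntegrable (fun t => y t * haar J k' t) volume u v := by
  refine (y_intint hc h0 huv h1).mono_fun ?_ ?_
  · have hm : AEStronglyMeasurable y (volume.restrict (Set.uIoc u v)) := by
      rw [uIoc_of_le huv]
      exact (y_intint hc h0 huv h1).aestronglyMeasurable
    exact hm.mul (haar_measurable J k').aestronglyMeasurable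
  · refine Filter.Eventually.of_forall fun t => ?_
    simp only [norm_mul, Real.norm_eq_abs]
    calc |y t| * |haar J k' t| ≤ |y t| * 1 :=
          mul_le_mul_of_nonneg_left (haar_abs_le J k' t) (abs_nonneg _)
      _ = |y t| := mul_one _

include hc in
lemma integral_haar_mul {J k' : ℕ} (hk' : k' < 2 ^ J) :
    ∫ t in (0:ℝ)..1, y t * haar J k' t
      = (∫ t in ((k':ℝ)/2^J)..(((k':ℝ)+1/2)/2^J), y t)
        - ∫ t in (((k':ℝ)+1/2)/2^J)..(((k':ℝ)+1)/2^J), y t := by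
  set l : ℝ := (k':ℝ)/2^J with hl
  set m : ℝ := ((k':ℝ)+1/2)/2^J with hm
  set r : ℝ := ((k':ℝ)+1)/2^J with hr
  have hp : (0:ℝ) < 2 ^ J := by positivity
  have hk1 : ((k':ℝ) + 1) ≤ 2 ^ J := by
    have : (k' : ℝ) + 1 ≤ (2:ℝ) ^ J := by exact_mod_cast Nat.succ_le_of_lt hk'
    simpa using this
  have h0l : (0:ℝ) ≤ l := by positivity
  have hlm : l ≤ m := by rw [hl, hm]; gcongr; linarith
  have hmr : m ≤ r := by rw [hm, hr]; gcongr; linarith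
  have hr1 : r ≤ 1 := by rw [hr, div_le_one hp]; exact hk1
  have h0m : (0:ℝ) ≤ m := le_trans h0l hlm
  have h0r : (0:ℝ) ≤ r := le_trans h0m hmr
  have hm1 : m ≤ 1 := le_trans hmr hr1
  have hl1 : l ≤ 1 := le_trans hlm hm1
  have i1 : IntervalIntegrable (fun t => y t * haar J k' t) volume 0 l :=
    yhaar_intint hc J k' le_rfl h0l hl1
  have i2 : IntervalIntegrable (fun t => y t * haar J k' t) volume l m :=
    yhaar_intint hc J k' h0l hlm hm1
  have i3 : IntervalIntegrable (fun t => y t * haar J k' t) volume m r :=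
    yhaar_intint hc J k' h0m hmr hr1
  have i4 : IntervalIntegrable (fun t => y t * haar J k' t) volume r 1 :=
    yhaar_intint hc J k' h0r hr1 le_rfl
  have split : ∫ t in (0:ℝ)..1, y t * haar J k' t
      = (∫ t in (0:ℝ)..l, y t * haar J k' t) + ((∫ t in l..m, y t * haar J k' t)
        + ((∫ t in m..r, y t * haar J k' t) + ∫ t in r..(1:ℝ), y t * haar J k' t)) := by
    rw [integral_add_adjacent_intervals i3 i4,
      integral_add_adjacent_intervals i2 (i3.trans i4),
      integral_add_adjacent_intervals i1 ((i2.trans i3).trans i4)]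
  have e1 : ∫ t in (0:ℝ)..l, y t * haar J k' t = 0 := by
    have h : ∫ t in (0:ℝ)..l, y t * haar J k' t = ∫ t in (0:ℝ)..l, (0:ℝ) := by
      refine integral_congr_ae ?_
      filter_upwards [ae_ne' l] with t ht hmem
      rw [uIoc_of_le h0l] at hmem
      rw [haar_zero_left (lt_of_le_of_ne hmem.2 ht), mul_zero]
    simpa using h
  have e2 : ∫ t in l..m, y t * haar J k' t = ∫ t in l..m, y t := by
    refine integral_congr_ae ?_
    filter_upwards [ae_ne' m] with t ht hmem
    rw [uIoc_of_le hlm] at hmem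
    rw [haar_one (le_of_lt hmem.1) (lt_of_le_of_ne hmem.2 ht), mul_one]
  have e3 : ∫ t in m..r, y t * haar J k' t = - ∫ t in m..r, y t := by
    rw [← intervalIntegral.integral_neg]
    refine integral_congr_ae ?_
    filter_upwards [ae_ne' r] with t ht hmem
    rw [uIoc_of_le hmr] at hmem
    rw [haar_neg (le_of_lt hmem.1) (lt_of_le_of_ne hmem.2 ht)]
    ring
  have e4 : ∫ t in r..(1:ℝ), y t * haar J k' t = 0 := by
    have h : ∫ t in r..(1:ℝ), y t * haar J k' t = ∫ t in r..(1:ℝ), (0:ℝ) := by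
      refine integral_congr_ae ?_
      filter_upwards with t hmem
      rw [uIoc_of_le hr1] at hmem
      rw [haar_zero_right (le_of_lt hmem.1), mul_zero]
    simpa using h
  rw [split, e1, e2, e3, e4]
  ring

end coeff

lemma nhaar_high {J k' : ℕ} (hk' : k' < 2 ^ J) (x : ℝ) :
    nhaar (2 ^ J + k' + 1) x = (2:ℝ) ^ ((J:ℝ)/2) * haar J k' x := by
  have hpos : 0 < 2 ^ J := Nat.pow_pos (by norm_num : 0 < 2)
  have hne : 2 ^ J + k' + 1 ≠ 1 := by omega
  have h1 : (2 ^ J + k' + 1) - 1 = 2 ^ J + k' := by omega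
  have hlog : Nat.log2 (2 ^ J + k') = J := by
    rw [Nat.log2_eq_log_two]
    refine Nat.log_eq_of_pow_le_of_lt_pow (by omega) ?_
    rw [pow_succ]; omega
  unfold nhaar
  rw [if_neg hne, h1, hlog]
  congr 2
  omega

lemma nhaar_one {x : ℝ} (h1 : 0 ≤ x) (h2 : x < 1) : nhaar 1 x = 1 := by
  unfold nhaar
  rw [if_pos rfl, if_pos ⟨h1, h2⟩]

lemma sum_nhaar_eq {y : ℝ → ℝ} (hc : ContinuousOn y (Icc 0 1)) (a : ℕ → ℝ)
    (ha : ∀ i, a i = ∫ t in (0:ℝ)..1, y t * nhaar i t) :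
    ∀ J : ℕ, ∀ m : ℕ, m < 2 ^ J → ∀ x : ℝ, (m:ℝ)/2^J ≤ x → x < ((m:ℝ)+1)/2^J →
    ∑ i ∈ Finset.Icc 1 (2 ^ J), a i * nhaar i x
      = 2^J * ∫ t in ((m:ℝ)/2^J)..(((m:ℝ)+1)/2^J), y t := by
  intro J
  induction J with
  | zero =>
    intro m hm x hx1 hx2
    interval_cases m
    simp only [pow_zero, Nat.cast_zero] at *
    rw [Finset.Icc_self, Finset.sum_singleton]
    have hx1' : (0:ℝ) ≤ x := by simpa using hx1
    have hx2' : x < 1 := by simpa using hx2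
    rw [nhaar_one hx1' hx2', mul_one, ha 1]
    have h : ∫ t in (0:ℝ)..1, y t * nhaar 1 t = ∫ t in (0:ℝ)..1, y t := by
      refine integral_congr_ae ?_
      filter_upwards [ae_ne' (1:ℝ)] with t ht hmem
      rw [uIoc_of_le zero_le_one] at hmem
      rw [nhaar_one (le_of_lt hmem.1) (lt_of_le_of_ne hmem.2 ht), mul_one]
    rw [h]
    norm_num
  | succ J ih =>
    intro m hm x hx1 hx2
    have h2J : (0:ℝ) < 2 ^ J := by positivity
    have h2Jn : 0 < 2 ^ J := Nat.pow_pos (by norm_num : 0 < 2)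
    have hps : (2:ℕ) ^ (J+1) = 2 * 2 ^ J := by rw [pow_succ]; ring
    set m' := m / 2 with hm'def
    have hm' : m' < 2 ^ J := by omega
    have hcase : m = 2*m' ∨ m = 2*m' + 1 := by omega
    have keyr : ∀ n : ℕ, ((n:ℝ))/2^J = (2*(n:ℝ))/2^(J+1) := fun n => by
      rw [pow_succ]; field_simp
    -- level-J dyadic bounds for x
    have h2J1 : (0:ℝ) < 2 ^ (J+1) := by positivity
    have hx1' : (m':ℝ)/2^J ≤ x := by
      refine le_trans ?_ hx1
      rw [keyr m']
      refine div_le_div_of_nonneg_right ?_ h2J1.le |>.trans_eq rfl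
      exact_mod_cast (by omega : 2*m' ≤ m)
    have hx2' : x < ((m':ℝ)+1)/2^J := by
      refine lt_of_lt_of_le hx2 ?_
      have heq2 : ((m':ℝ)+1)/2^J = (2*(m':ℝ)+2)/2^(J+1) := by
        rw [pow_succ]; field_simp
      rw [heq2]
      refine div_le_div_of_nonneg_right ?_ h2J1.le |>.trans_eq rfl
      have : m + 1 ≤ 2*m' + 2 := by omega
      exact_mod_cast this
    -- endpoints
    set l : ℝ := (m':ℝ)/2^J with hldef
    set md : ℝ := ((m':ℝ)+1/2)/2^J with hmddef
    set r : ℝ := ((m':ℝ)+1)/2^J with hrdef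
    have hk1 : ((m':ℝ) + 1) ≤ 2 ^ J := by exact_mod_cast Nat.succ_le_of_lt hm'
    have h0l : (0:ℝ) ≤ l := by positivity
    have hlmd : l ≤ md := by rw [hldef, hmddef]; gcongr; linarith
    have hmdr : md ≤ r := by rw [hmddef, hrdef]; gcongr; linarith
    have hr1 : r ≤ 1 := by rw [hrdef, div_le_one h2J]; exact hk1
    have h0md : (0:ℝ) ≤ md := le_trans h0l hlmd
    have hmd1 : md ≤ 1 := le_trans hmdr hr1
    set A : ℝ := ∫ t in l..md, y t with hA
    set B : ℝ := ∫ t in md..r, y t with hB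
    have hAB : ∫ t in l..r, y t = A + B :=
      (integral_add_adjacent_intervals (y_intint hc h0l hlmd hmd1)
        (y_intint hc h0md hmdr hr1)).symm
    -- split the sum
    have hle1 : (2:ℕ)^J ≤ 2^(J+1) := by omega
    have hsplit : ∑ i ∈ Finset.Icc 1 (2^(J+1)), a i * nhaar i x
        = (∑ i ∈ Finset.Icc 1 (2^J), a i * nhaar i x)
          + ∑ i ∈ Finset.Ioc (2^J) (2^(J+1)), a i * nhaar i x := by
      rw [show (1:ℕ) = 0 + 1 from rfl, Finset.Icc_add_one_left_eq_Ioc, Finset.Icc_add_one_left_eq_Ioc]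
      exact (Finset.sum_Ioc_consecutive _ (Nat.zero_le _) hle1).symm
    -- the second sum has a single nonzero term
    have hsum2 : ∑ i ∈ Finset.Ioc (2^J) (2^(J+1)), a i * nhaar i x
        = a (2^J + m' + 1) * nhaar (2^J + m' + 1) x := by
      refine Finset.sum_eq_single_of_mem _ (Finset.mem_Ioc.2 ⟨by omega, by omega⟩) ?_
      intro i hi hne
      rw [Finset.mem_Ioc] at hi
      set k' := i - 2^J - 1 with hk'def
      have hi' : i = 2^J + k' + 1 := by omega
      have hk' : k' < 2^J := by omega
      have hkm : k' ≠ m' := by omega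
      rw [hi', nhaar_high hk']
      suffices h : haar J k' x = 0 by rw [h]; ring
      rcases lt_or_gt_of_ne hkm with h | h
      · apply haar_zero_right
        have hcast : ((k':ℝ)+1) ≤ (m':ℝ) := by exact_mod_cast Nat.succ_le_of_lt h
        calc ((k':ℝ)+1)/2^J ≤ (m':ℝ)/2^J := by gcongr
          _ ≤ x := hx1'
      · apply haar_zero_left
        have hcast : ((m':ℝ)+1) ≤ (k':ℝ) := by exact_mod_cast Nat.succ_le_of_lt h
        calc x < ((m':ℝ)+1)/2^J := hx2'
          _ ≤ (k':ℝ)/2^J := by gcongr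
    -- coefficient
    have hcoef : a (2^J + m' + 1) = (2:ℝ)^((J:ℝ)/2) * (A - B) := by
      rw [ha]
      have heq : ∀ t : ℝ, y t * nhaar (2^J + m' + 1) t
          = (2:ℝ)^((J:ℝ)/2) * (y t * haar J m' t) := fun t => by
        rw [nhaar_high hm']; ring
      simp only [heq]
      rw [intervalIntegral.integral_const_mul, integral_haar_mul hc hm']
    have hcc : (2:ℝ)^((J:ℝ)/2) * (2:ℝ)^((J:ℝ)/2) = 2^J := by
      rw [← Real.rpow_add two_pos]
      rw [show (J:ℝ)/2 + (J:ℝ)/2 = (J:ℝ) by ring]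
      exact Real.rpow_natCast 2 J
    rw [hsplit, hsum2, ih m' hm' x hx1' hx2', hcoef, nhaar_high hm']
    rcases hcase with hpar | hpar
    · -- m even: x in left half
      have e1 : (m:ℝ)/2^(J+1) = l := by
        rw [hldef, keyr m', hpar]; push_cast; ring_nf
      have e2 : ((m:ℝ)+1)/2^(J+1) = md := by
        rw [hmddef, hpar, pow_succ]; push_cast; field_simp
      have hxmd : x < md := by rw [← e2]; exact hx2
      have hh : haar J m' x = 1 := haar_one hx1' (hmddef ▸ hxmd)
      rw [e1, e2, hh, hAB, pow_succ]
      linear_combination (A - B) * hcc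
    · -- m odd: x in right half
      have e1 : (m:ℝ)/2^(J+1) = md := by
        rw [hmddef, hpar, pow_succ]; push_cast; field_simp
      have e2 : ((m:ℝ)+1)/2^(J+1) = r := by
        rw [hrdef, hpar, pow_succ]; push_cast; field_simp; ring
      have hxmd : md ≤ x := by rw [← e1]; exact hx1
      have hxr : x < r := by rw [← e2]; exact hx2
      have hh : haar J m' x = -1 := haar_neg (hmddef ▸ hxmd) (hrdef ▸ hxr)
      rw [e1, e2, hh, hAB, pow_succ]
      linear_combination -(A - B) * hcc

lemma interval_var_bound {L : ℝ} {y : ℝ → ℝ}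
    (hy : ∀ x₁ ∈ Set.Icc (0 : ℝ) 1, ∀ x₂ ∈ Set.Icc (0 : ℝ) 1,
      |y x₁ - y x₂| ≤ L * |x₁ - x₂|)
    (hc : ContinuousOn y (Icc 0 1))
    {u v : ℝ} (h0 : 0 ≤ u) (huv : u < v) (h1 : v ≤ 1) {c : ℝ}
    (hcval : c * (v - u) = ∫ t in u..v, y t) :
    ∫ t in u..v, (y t - c)^2 ≤ L^2 * (v-u)^3 / 12 := by
  set μ : ℝ := (u+v)/2 with hμ
  have hμmem : μ ∈ Icc (0:ℝ) 1 := ⟨by rw [hμ]; linarith, by rw [hμ]; linarith⟩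
  set c' : ℝ := y μ with hc'
  have hsub : Icc u v ⊆ Icc (0:ℝ) 1 := Icc_subset_Icc h0 h1
  have hcy : ContinuousOn y (Icc u v) := hc.mono hsub
  have huIcc : uIcc u v = Icc u v := uIcc_of_le huv.le
  have int_y : IntervalIntegrable y volume u v := by
    rw [← huIcc] at hcy; exact hcy.intervalIntegrable
  have int_ysq : IntervalIntegrable (fun t => (y t)^2) volume u v := by
    have : ContinuousOn (fun t => (y t)^2) (uIcc u v) := by
      rw [huIcc]; exact hcy.pow 2
    exact this.intervalIntegrable
  set I1 : ℝ := ∫ t in u..v, y t with hI1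
  set I2 : ℝ := ∫ t in u..v, (y t)^2 with hI2
  have expand : ∀ d : ℝ, ∫ t in u..v, (y t - d)^2 = I2 - 2*d*I1 + d^2*(v-u) := by
    intro d
    have hpt : ∀ t : ℝ, (y t - d)^2 = (y t)^2 - (2*d)*(y t) + d^2 := fun t => by ring
    simp only [hpt]
    rw [intervalIntegral.integral_add ((int_ysq.sub (int_y.const_mul (2*d))))
        intervalIntegrable_const,
      intervalIntegral.integral_sub int_ysq (int_y.const_mul (2*d)),
      intervalIntegral.integral_const_mul, intervalIntegral.integral_const]
    simp only [smul_eq_mul]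
    ring
  have int_c' : IntervalIntegrable (fun t => (y t - c')^2) volume u v := by
    have : ContinuousOn (fun t => (y t - c')^2) (uIcc u v) := by
      rw [huIcc]; exact (hcy.sub continuousOn_const).pow 2
    exact this.intervalIntegrable
  have int_quad : IntervalIntegrable (fun t => L^2*(t - μ)^2) volume u v :=
    (Continuous.continuousOn (by continuity)).intervalIntegrable
  have step1 : ∫ t in u..v, (y t - c)^2 ≤ ∫ t in u..v, (y t - c')^2 := by
    rw [expand c, expand c']
    have hz2 : 2*(c - c') * (c*(v-u) - I1) = 0 := by rw [hcval]; ring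
    nlinarith [mul_nonneg (sub_nonneg.2 huv.le) (sq_nonneg (c - c')), hz2]
  have step2 : ∫ t in u..v, (y t - c')^2 ≤ ∫ t in u..v, L^2*(t - μ)^2 := by
    refine intervalIntegral.integral_mono_on huv.le int_c' int_quad ?_
    intro t ht
    have htm : t ∈ Icc (0:ℝ) 1 := hsub ht
    have hlip := hy t htm μ hμmem
    have h1' : (y t - c')^2 = |y t - y μ|^2 := by rw [sq_abs]
    have h2' : L^2*(t - μ)^2 = (L * |t - μ|)^2 := by
      rw [mul_pow, sq_abs]
    rw [h1', h2']
    have hLa : 0 ≤ L * |t - μ| := le_trans (abs_nonneg _) hlip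
    exact pow_le_pow_left₀ (abs_nonneg _) hlip 2
  have step3 : ∫ t in u..v, L^2*(t - μ)^2 = L^2 * (v-u)^3 / 12 := by
    rw [intervalIntegral.integral_const_mul]
    have : ∫ t in u..v, (t - μ)^2 = ∫ s in u-μ..v-μ, s^2 := by
      exact (intervalIntegral.integral_comp_sub_right (fun s => s^2) μ)
    rw [this, integral_pow]
    rw [hμ]
    ring
  calc ∫ t in u..v, (y t - c)^2 ≤ ∫ t in u..v, L^2*(t - μ)^2 := le_trans step1 step2
    _ = L^2 * (v-u)^3 / 12 := step3

theorem haar_convergence_rate (L : ℝ) (y : ℝ → ℝ)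
    (hy : ∀ x₁ ∈ Set.Icc (0 : ℝ) 1, ∀ x₂ ∈ Set.Icc (0 : ℝ) 1,
      |y x₁ - y x₂| ≤ L * |x₁ - x₂|)
    (J : ℕ) (k : ℕ) (hk : k = 2 ^ (J + 1))
    (a : ℕ → ℝ) (ha : ∀ i, a i = ∫ x in (0 : ℝ)..1, y x * nhaar i x) :
    Real.sqrt (∫ x in (0 : ℝ)..1, (y x - ∑ i ∈ Finset.Icc 1 k, a i * nhaar i x) ^ 2)
      ≤ (L / Real.sqrt 3) * (1 / k) := by
  subst hk
  have hL : 0 ≤ L := by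
    have h := hy 0 (by norm_num) 1 (by norm_num)
    have h2 := abs_nonneg (y 0 - y 1)
    simp only [zero_sub, abs_neg, abs_one, mul_one] at h
    linarith
  have hc : ContinuousOn y (Icc 0 1) := by
    have hlip : LipschitzOnWith (Real.toNNReal L) y (Icc 0 1) := by
      rw [lipschitzOnWith_iff_dist_le_mul]
      intro x₁ hx₁ x₂ hx₂
      rw [Real.dist_eq, Real.dist_eq, Real.coe_toNNReal L hL]
      exact hy x₁ hx₁ x₂ hx₂
    exact hlip.continuousOn
  have hNpos : (0:ℝ) < 2^(J+1) := by positivity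
  have hcast : ((2^(J+1) : ℕ) : ℝ) = 2^(J+1) := by push_cast; ring
  set n : ℕ := 2^(J+1) with hn
  set N : ℝ := 2^(J+1) with hN
  set p : ℕ → ℝ := fun m => (m:ℝ)/N with hp
  set S : ℝ → ℝ := fun x => ∑ i ∈ Finset.Icc 1 n, a i * nhaar i x with hS
  have hpsucc : ∀ m : ℕ, p (m+1) = ((m:ℝ)+1)/N := by
    intro m; simp only [hp]; push_cast; ring_nf
  have hplt : ∀ m : ℕ, p m < p (m+1) := by
    intro m
    rw [hpsucc m]
    exact div_lt_div_of_pos_right (by linarith) hNpos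
  have hp0 : ∀ m : ℕ, 0 ≤ p m := fun m => by positivity
  have hple : ∀ m : ℕ, m ≤ n → p m ≤ 1 := by
    intro m hm
    rw [hp, div_le_one hNpos, ← hcast]
    exact_mod_cast hm
  have hdiff : ∀ m : ℕ, p (m+1) - p m = 1/N := by
    intro m; rw [hpsucc m, hp]; field_simp; ring
  -- the partial sum equals the local average
  have key := sum_nhaar_eq hc a ha (J+1)
  -- local averages
  set c : ℕ → ℝ := fun m => N * ∫ t in p m..p (m+1), y t with hcdef
  have hSc : ∀ m : ℕ, m < n → ∀ t : ℝ, p m ≤ t → t < p (m+1) → S t = c m := by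
    intro m hm t ht1 ht2
    have h2 : t < ((m:ℝ)+1)/N := by rw [← hpsucc m]; exact ht2
    simp only [hS, hcdef]
    rw [hpsucc m]
    exact key m hm t ht1 h2
  -- a.e. equality on each piece
  have haeeq : ∀ m : ℕ, m < n → (fun t => (y t - c m)^2)
      =ᵐ[MeasureTheory.volume.restrict (Set.uIoc (p m) (p (m+1)))] (fun t => (y t - S t)^2) := by
    intro m hm
    filter_upwards [ae_restrict_mem measurableSet_uIoc,
      ae_restrict_of_ae (ae_ne' (p (m+1)))] with t hmem hne
    rw [uIoc_of_le (hplt m).le] at hmem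
    rw [hSc m hm t hmem.1.le (lt_of_le_of_ne hmem.2 hne)]
  have hint : ∀ m : ℕ, m < n → IntervalIntegrable (fun t => (y t - S t)^2) volume (p m) (p (m+1)) := by
    intro m hm
    have hi : IntervalIntegrable (fun t => (y t - c m)^2) volume (p m) (p (m+1)) := by
      apply ContinuousOn.intervalIntegrable
      rw [uIcc_of_le (hplt m).le]
      exact ((hc.mono (Icc_subset_Icc (hp0 m) (hple (m+1) (by omega)))).sub
        continuousOn_const).pow 2
    exact hi.congr_ae (haeeq m hm)
  have heach : ∀ m : ℕ, m < n →
      ∫ t in p m..p (m+1), (y t - S t)^2 ≤ L^2 * (1/N)^3 / 12 := by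
    intro m hm
    have he : ∫ t in p m..p (m+1), (y t - c m)^2 = ∫ t in p m..p (m+1), (y t - S t)^2 := by
      refine integral_congr_ae ?_
      filter_upwards [ae_ne' (p (m+1))] with t hne hmem
      rw [uIoc_of_le (hplt m).le] at hmem
      rw [hSc m hm t hmem.1.le (lt_of_le_of_ne hmem.2 hne)]
    rw [← he]
    have hcval : c m * (p (m+1) - p m) = ∫ t in p m..p (m+1), y t := by
      rw [hdiff m]
      simp only [hcdef]
      field_simp
    have hb := interval_var_bound hy hc (hp0 m) (hplt m) (hple (m+1) (by omega)) hcval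
    rwa [hdiff m] at hb
  have hsplit : ∫ x in (0:ℝ)..1, (y x - S x)^2
      = ∑ m ∈ Finset.range n, ∫ t in p m..p (m+1), (y t - S t)^2 := by
    have hadd := intervalIntegral.sum_integral_adjacent_intervals (a := p) (n := n)
      (fun m hm => hint m hm)
    have hp0' : p 0 = 0 := by simp [hp]
    have hpn : p n = 1 := by
      simp only [hp]
      rw [hcast, div_self hNpos.ne']
    rw [hp0', hpn] at hadd
    exact hadd.symm
  have htot : ∫ x in (0:ℝ)..1, (y x - S x)^2 ≤ (n:ℝ) * (L^2 * (1/N)^3 / 12) := by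
    rw [hsplit]
    calc ∑ m ∈ Finset.range n, ∫ t in p m..p (m+1), (y t - S t)^2
        ≤ ∑ _m ∈ Finset.range n, L^2 * (1/N)^3 / 12 :=
          Finset.sum_le_sum (fun m hm => heach m (Finset.mem_range.1 hm))
      _ = (n:ℝ) * (L^2 * (1/N)^3 / 12) := by
          rw [Finset.sum_const, Finset.card_range, nsmul_eq_mul]
  have h3 : Real.sqrt 3 ^ 2 = 3 := Real.sq_sqrt (by norm_num)
  have hcmp : (n:ℝ) * (L^2 * (1/N)^3 / 12) ≤ ((L / Real.sqrt 3) * (1/N))^2 := by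
    rw [hcast]
    have e3 : ((L / Real.sqrt 3) * (1/N))^2 = L^2 / (3*N^2) := by
      rw [mul_pow, div_pow, div_pow, h3, one_pow]
      ring
    have e1 : N * (L^2 * (1/N)^3 / 12) = L^2 / (12*N^2) := by field_simp
    rw [e1, e3]
    exact div_le_div_of_nonneg_left (sq_nonneg L) (by positivity) (by nlinarith)
  rw [hcast]
  calc Real.sqrt (∫ x in (0:ℝ)..1, (y x - S x)^2)
      ≤ Real.sqrt (((L / Real.sqrt 3) * (1/N))^2) := Real.sqrt_le_sqrt (htot.trans hcmp)
    _ = (L / Real.sqrt 3) * (1/N) :=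
        Real.sqrt_sq (mul_nonneg (div_nonneg hL (Real.sqrt_nonneg 3)) (by positivity))
end

section
/- Let f : [0,1] × ℝ → ℝ be such that f(t,·) is twice continuously differentiable with |f_y| ≤ m₁ and |f_{yy}| ≤ k₁ everywhere, let G(x,t)q(t) be a kernel with g₁ = sup_{x∈[0,1]} ∫₀¹ |G(x,t)q(t)| dt < ∞ and m₁g₁ < 1. If continuous functions y_{n-1}, y_n, y_{n+1} on [0,1] satisfy Δy_{n+1}(x) = ∫₀¹ G(x,t)q(t)[Δf_n(t) + Δy_{n+1}(t) f_y(t, y_n(t)) - Δy_n(t) f_y(t, y_{n-1}(t))] dt, where Δy_n = y_n - y_{n-1} and Δf_n(t) = f(t, y_n(t)) - f(t, y_{n-1}(t)), then ‖Δy_{n+1}‖_∞ ≤ (k₁ g₁ / (2(1 - m₁ g₁))) · ‖Δy_n‖_∞². -/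
open MeasureTheory intervalIntegral Set

lemma abs_int_abs_sub (a b : ℝ) : |(∫ t in a..b, |t - a|)| = (b - a) ^ 2 / 2 := by
  rcases le_total a b with h | h
  · have : ∫ t in a..b, |t - a| = ∫ t in a..b, (t - a) := by
      apply intervalIntegral.integral_congr
      intro t ht
      rw [uIcc_of_le h] at ht
      exact abs_of_nonneg (by linarith [ht.1])
    rw [this, intervalIntegral.integral_sub intervalIntegral.intervalIntegrable_id
      intervalIntegrable_const, integral_id, intervalIntegral.integral_const]
    rw [smul_eq_mul, abs_of_nonneg (by nlinarith)]
    ring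
  · have : ∫ t in a..b, |t - a| = ∫ t in a..b, (a - t) := by
      apply intervalIntegral.integral_congr
      intro t ht
      rw [uIcc_of_ge h] at ht
      show |t - a| = a - t
      rw [abs_sub_comm]
      exact abs_of_nonneg (by linarith [ht.2])
    rw [this, intervalIntegral.integral_sub intervalIntegrable_const
      intervalIntegral.intervalIntegrable_id, integral_id, intervalIntegral.integral_const]
    rw [smul_eq_mul, abs_of_nonpos (by nlinarith)]
    ring

lemma taylor_bd {F : ℝ → ℝ} (hF : ContDiff ℝ 2 F) {k : ℝ}
    (hk : ∀ y, |deriv (deriv F) y| ≤ k) (a b : ℝ) :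
    |F b - F a - (b - a) * deriv F a| ≤ k / 2 * (b - a) ^ 2 := by
  have hk0 : 0 ≤ k := (abs_nonneg _).trans (hk 0)
  have h2 := hF
  rw [show (2 : WithTop ℕ∞) = 1 + 1 by norm_num, contDiff_succ_iff_deriv] at h2
  have hF1 : Differentiable ℝ F := h2.1
  have hdF : ContDiff ℝ 1 (deriv F) := by exact_mod_cast h2.2.2
  have hdF1 : Differentiable ℝ (deriv F) := hdF.differentiable one_ne_zero
  have hcont : Continuous (deriv F) := hdF.continuous
  have hlip : ∀ s t : ℝ, |deriv F s - deriv F t| ≤ k * |s - t| := fun s t =>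
    Convex.norm_image_sub_le_of_norm_deriv_le (fun x _ => hdF1 x) (fun x _ => hk x)
      convex_univ (mem_univ t) (mem_univ s)
  have key : ∫ t in a..b, (deriv F t - deriv F a) = F b - F a - (b - a) * deriv F a := by
    rw [intervalIntegral.integral_sub (hcont.intervalIntegrable _ _) intervalIntegrable_const,
      intervalIntegral.integral_deriv_eq_sub (fun x _ => hF1 x) (hcont.intervalIntegrable _ _),
      intervalIntegral.integral_const, smul_eq_mul]
  calc |F b - F a - (b - a) * deriv F a| = ‖∫ t in a..b, (deriv F t - deriv F a)‖ := by
        rw [key, Real.norm_eq_abs]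
    _ ≤ |(∫ t in a..b, k * |t - a|)| := by
        apply intervalIntegral.norm_integral_le_abs_of_norm_le
        · filter_upwards with t
          rw [Real.norm_eq_abs]
          exact hlip t a
        · exact (continuous_const.mul (continuous_abs.comp (by fun_prop))).intervalIntegrable _ _
    _ = k * |(∫ t in a..b, |t - a|)| := by
        rw [intervalIntegral.integral_const_mul, abs_mul, abs_of_nonneg hk0]
    _ = k / 2 * (b - a) ^ 2 := by rw [abs_int_abs_sub]; ring

lemma biSup_facts (g : ℝ → ℝ) (hg : ContinuousOn g (Set.Icc 0 1)) :
    ∀ t ∈ Set.Icc (0:ℝ) 1, g t ≤ ⨆ x ∈ Set.Icc (0:ℝ) 1, g x := by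
  obtain ⟨M, hM⟩ := (isCompact_Icc).exists_bound_of_continuousOn hg
  have hbdd : BddAbove (Set.range fun x => ⨆ _ : x ∈ Set.Icc (0:ℝ) 1, g x) := by
    refine ⟨max M 0, ?_⟩
    rintro y ⟨x, rfl⟩
    refine Real.iSup_le (fun hx => ?_) (le_max_right _ _)
    have h := hM x hx
    rw [Real.norm_eq_abs] at h
    exact (le_abs_self _).trans (h.trans (le_max_left _ _))
  intro t ht
  calc g t = ⨆ _ : t ∈ Set.Icc (0:ℝ) 1, g t := (ciSup_pos (f := fun _ => g t) ht).symm
    _ ≤ ⨆ x ∈ Set.Icc (0:ℝ) 1, g x := le_ciSup hbdd t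

theorem quasilinearization_estimate (f : ℝ → ℝ → ℝ) (m₁ k₁ g₁ : ℝ)
    (hf : ∀ t, ContDiff ℝ 2 (f t))
    (hfy : ∀ t y, |deriv (f t) y| ≤ m₁)
    (hfyy : ∀ t y, |deriv (deriv (f t)) y| ≤ k₁)
    (K : ℝ → ℝ → ℝ)
    (hKint : ∀ x ∈ Set.Icc (0 : ℝ) 1,
      IntervalIntegrable (fun t => |K x t|) MeasureTheory.volume 0 1)
    (hg₁ : ∀ x ∈ Set.Icc (0 : ℝ) 1, (∫ t in (0 : ℝ)..1, |K x t|) ≤ g₁)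
    (hmg : m₁ * g₁ < 1)
    (ym yn yp : ℝ → ℝ)
    (hym : ContinuousOn ym (Set.Icc 0 1))
    (hyn : ContinuousOn yn (Set.Icc 0 1))
    (hyp : ContinuousOn yp (Set.Icc 0 1))
    (heq : ∀ x ∈ Set.Icc (0 : ℝ) 1,
      yp x - yn x = ∫ t in (0 : ℝ)..1, K x t *
        ((f t (yn t) - f t (ym t)) + (yp t - yn t) * deriv (f t) (yn t)
          - (yn t - ym t) * deriv (f t) (ym t))) :
    (⨆ x ∈ Set.Icc (0 : ℝ) 1, |yp x - yn x|)
      ≤ (k₁ * g₁ / (2 * (1 - m₁ * g₁))) *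
        (⨆ x ∈ Set.Icc (0 : ℝ) 1, |yn x - ym x|) ^ 2 := by
  have hm₁ : 0 ≤ m₁ := (abs_nonneg _).trans (hfy 0 0)
  have hk₁ : 0 ≤ k₁ := (abs_nonneg _).trans (hfyy 0 0)
  have h01 : (0:ℝ) ∈ Set.Icc (0:ℝ) 1 := by norm_num
  have hg0 : 0 ≤ g₁ :=
    le_trans (intervalIntegral.integral_nonneg (by norm_num) (fun t _ => abs_nonneg _))
      (hg₁ 0 h01)
  have h1m : 0 < 1 - m₁ * g₁ := by linarith
  set S := ⨆ x ∈ Set.Icc (0:ℝ) 1, |yp x - yn x| with hSdef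
  set T := ⨆ x ∈ Set.Icc (0:ℝ) 1, |yn x - ym x| with hTdef
  -- boundedness and sup facts
  have hTb : ∀ t ∈ Set.Icc (0:ℝ) 1, |yn t - ym t| ≤ T :=
    biSup_facts (fun t => |yn t - ym t|) ((hyn.sub hym).abs)
  have hSb : ∀ t ∈ Set.Icc (0:ℝ) 1, |yp t - yn t| ≤ S :=
    biSup_facts (fun t => |yp t - yn t|) ((hyp.sub hyn).abs)
  have hT0 : 0 ≤ T := (abs_nonneg _).trans (hTb 0 h01)
  have hS0 : 0 ≤ S := (abs_nonneg _).trans (hSb 0 h01)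
  set C₀ := k₁ / 2 * T ^ 2 + m₁ * S with hC₀def
  have hC₀0 : 0 ≤ C₀ := by positivity
  -- pointwise bound on the bracket
  have hE : ∀ t ∈ Set.Icc (0:ℝ) 1,
      |(f t (yn t) - f t (ym t)) + (yp t - yn t) * deriv (f t) (yn t)
          - (yn t - ym t) * deriv (f t) (ym t)| ≤ C₀ := by
    intro t ht
    have h1 : |f t (yn t) - f t (ym t) - (yn t - ym t) * deriv (f t) (ym t)|
        ≤ k₁ / 2 * (yn t - ym t) ^ 2 := taylor_bd (hf t) (hfyy t) (ym t) (yn t)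
    have hsq : (yn t - ym t) ^ 2 ≤ T ^ 2 := by
      rw [← sq_abs]
      exact pow_le_pow_left₀ (abs_nonneg _) (hTb t ht) 2
    have h2 : |(yp t - yn t) * deriv (f t) (yn t)| ≤ S * m₁ := by
      rw [abs_mul]
      exact mul_le_mul (hSb t ht) (hfy t _) (abs_nonneg _) hS0
    calc |(f t (yn t) - f t (ym t)) + (yp t - yn t) * deriv (f t) (yn t)
          - (yn t - ym t) * deriv (f t) (ym t)|
        = |(f t (yn t) - f t (ym t) - (yn t - ym t) * deriv (f t) (ym t))
            + (yp t - yn t) * deriv (f t) (yn t)| := by ring_nf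
      _ ≤ |f t (yn t) - f t (ym t) - (yn t - ym t) * deriv (f t) (ym t)|
            + |(yp t - yn t) * deriv (f t) (yn t)| := abs_add_le _ _
      _ ≤ k₁ / 2 * T ^ 2 + S * m₁ := by
          gcongr
          exact h1.trans (by gcongr)
      _ = C₀ := by rw [hC₀def]; ring
  -- main pointwise estimate
  have hmain : ∀ x ∈ Set.Icc (0:ℝ) 1, |yp x - yn x| ≤ g₁ * C₀ := by
    intro x hx
    rw [heq x hx, ← Real.norm_eq_abs]
    calc ‖∫ t in (0:ℝ)..1, K x t *
        ((f t (yn t) - f t (ym t)) + (yp t - yn t) * deriv (f t) (yn t)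
          - (yn t - ym t) * deriv (f t) (ym t))‖
        ≤ |(∫ t in (0:ℝ)..1, |K x t| * C₀)| := by
          apply intervalIntegral.norm_integral_le_abs_of_norm_le
          · rw [MeasureTheory.ae_restrict_iff' measurableSet_uIoc]
            filter_upwards with t ht
            rw [Set.uIoc_of_le (by norm_num : (0:ℝ) ≤ 1)] at ht
            have ht' : t ∈ Set.Icc (0:ℝ) 1 := ⟨le_of_lt ht.1, ht.2⟩
            rw [Real.norm_eq_abs, abs_mul]
            exact mul_le_mul_of_nonneg_left (hE t ht') (abs_nonneg _)
          · exact (hKint x hx).mul_const _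
      _ = (∫ t in (0:ℝ)..1, |K x t|) * C₀ := by
          rw [intervalIntegral.integral_mul_const,
            abs_of_nonneg (mul_nonneg (intervalIntegral.integral_nonneg (by norm_num)
              (fun t _ => abs_nonneg _)) hC₀0)]
      _ ≤ g₁ * C₀ := mul_le_mul_of_nonneg_right (hg₁ x hx) hC₀0
  -- conclude
  have hSle : S ≤ g₁ * C₀ := by
    rw [hSdef]
    apply Real.iSup_le _ (mul_nonneg hg0 hC₀0)
    intro x
    exact Real.iSup_le (fun hx => hmain x hx) (mul_nonneg hg0 hC₀0)
  rw [hC₀def] at hSle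
  rw [div_mul_eq_mul_div, le_div_iff₀ (by linarith)]
  nlinarith [mul_le_mul_of_nonneg_right hSle (le_of_lt h1m)]
end

section
/- With A = 3 − 2√2, the function y(x) = 2 ln((A+1)/(A x² + 1)) satisfies (x y')' = −x e^y on (0,1) with y'(0) = 0 and y(1) = 0. -/
theorem problem5_exact_solution (A : ℝ) (hA : A = 3 - 2 * Real.sqrt 2)
    (y : ℝ → ℝ) (hy : ∀ x, y x = 2 * Real.log ((A + 1) / (A * x ^ 2 + 1))) :
    deriv y 0 = 0 ∧ y 1 = 0 ∧
    ∀ x ∈ Set.Ioo (0 : ℝ) 1,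
      deriv (fun u => u * deriv y u) x = -(x * Real.exp (y x)) := by
  have hs2 : Real.sqrt 2 ^ 2 = 2 := Real.sq_sqrt (by norm_num)
  have hs2lt : Real.sqrt 2 < 3 / 2 := by
    nlinarith [Real.sqrt_nonneg 2]
  have hA0 : 0 < A := by rw [hA]; nlinarith
  have hden : ∀ x : ℝ, 0 < A * x ^ 2 + 1 := fun x => by positivity
  have hkey : (A + 1) ^ 2 = 8 * A := by rw [hA]; nlinarith
  have hderiv : ∀ x : ℝ, HasDerivAt y (-4 * A * x / (A * x ^ 2 + 1)) x := by
    intro x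
    have h1 : HasDerivAt (fun u : ℝ => A * u ^ 2 + 1) (A * (2 * x)) x := by
      have := ((hasDerivAt_pow 2 x).const_mul A).add_const 1
      simpa using this
    have h2 : HasDerivAt (fun u : ℝ => Real.log (A * u ^ 2 + 1))
        (A * (2 * x) / (A * x ^ 2 + 1)) x := h1.log (hden x).ne'
    have h3 := (h2.const_mul (-2)).const_add (2 * Real.log (A + 1))
    have heq : y = fun u => 2 * Real.log (A + 1) + -2 * Real.log (A * u ^ 2 + 1) := by
      funext u
      rw [hy u, Real.log_div (by positivity) (hden u).ne']
      ring
    rw [heq]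
    refine h3.congr_deriv ?_
    ring
  have hdy : ∀ x : ℝ, deriv y x = -4 * A * x / (A * x ^ 2 + 1) := fun x => (hderiv x).deriv
  refine ⟨by rw [hdy 0]; simp, ?_, ?_⟩
  · rw [hy 1, show A * 1 ^ 2 + 1 = A + 1 by ring,
      div_self (ne_of_gt (by linarith : (0:ℝ) < A + 1))]
    simp
  · intro x hx
    have hfun : (fun u => u * deriv y u) = fun u => -4 * A * u ^ 2 / (A * u ^ 2 + 1) := by
      funext u
      rw [hdy u]
      ring
    rw [hfun]
    have hnum : HasDerivAt (fun u : ℝ => -4 * A * u ^ 2) (-4 * A * (2 * x)) x := by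
      have := (hasDerivAt_pow 2 x).const_mul (-4 * A)
      simpa using this
    have hden' : HasDerivAt (fun u : ℝ => A * u ^ 2 + 1) (A * (2 * x)) x := by
      have := ((hasDerivAt_pow 2 x).const_mul A).add_const 1
      simpa using this
    have hdiv := hnum.div hden' (hden x).ne'
    rw [show (fun u => -4 * A * u ^ 2 / (A * u ^ 2 + 1)) = ((fun u : ℝ => -4 * A * u ^ 2) / fun u => A * u ^ 2 + 1) from rfl, hdiv.deriv]
    have hexp : Real.exp (y x) = ((A + 1) / (A * x ^ 2 + 1)) ^ 2 := by
      rw [hy x, show (2 : ℝ) * Real.log ((A + 1) / (A * x ^ 2 + 1))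
          = Real.log (((A + 1) / (A * x ^ 2 + 1)) ^ 2) by rw [Real.log_pow]; push_cast; ring]
      exact Real.exp_log (by positivity)
    rw [hexp]
    have h := hden x
    field_simp
    linear_combination x * hkey
end

section
/- For the Dirichlet Green's function G(x,t) built from b(x) = ∫₀ˣ 1/p, the bound sup_{x∈[0,1]} ∫₀¹ G(x,t) q(t) dt ≤ ∫₀¹ (1/p(x)) ∫ₓ¹ q(s) ds dx holds; in particular, under condition (C₂) this supremum g₁ is finite. -/
open MeasureTheory Set ENNReal

lemma greens_q_aemeas (q : ℝ → ℝ)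
    (hqloc : ∀ x ∈ Set.Ioo (0 : ℝ) 1, MeasureTheory.IntegrableOn q (Set.Ioc x 1)) :
    AEMeasurable q (volume.restrict (Set.Ioc (0:ℝ) 1)) := by
  have hcover : Set.Ioc (0:ℝ) 1 = ⋃ n : ℕ, Set.Ioc (1/(n+2) : ℝ) 1 := by
    ext t
    simp only [Set.mem_iUnion, Set.mem_Ioc]
    constructor
    · rintro ⟨ht0, ht1⟩
      obtain ⟨n, hn⟩ := exists_nat_gt (1/t)
      have h2 : (0:ℝ) < (n:ℝ) + 2 := by positivity
      refine ⟨n, ?_, ht1⟩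
      rw [div_lt_iff₀ h2]
      have h3 : 1/t < (n:ℝ) + 2 := by linarith
      have := (div_lt_iff₀ ht0).mp h3
      linarith
    · rintro ⟨n, hn, ht1⟩
      have h2 : (0:ℝ) < (n:ℝ) + 2 := by positivity
      exact ⟨lt_trans (by positivity) hn, ht1⟩
  rw [hcover]
  rw [aemeasurable_iUnion_iff]
  intro n
  have h2 : (0:ℝ) < (n:ℝ) + 2 := by positivity
  have hmem : (1/((n:ℝ)+2)) ∈ Set.Ioo (0:ℝ) 1 := by
    constructor
    · positivity
    · rw [div_lt_one h2]; linarith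
  exact (hqloc _ hmem).aestronglyMeasurable.aemeasurable

lemma greens_fubini (f g : ℝ → ℝ)
    (hf : MeasureTheory.IntegrableOn f (Set.Ioc 0 1))
    (hf0 : ∀ x ∈ Set.Ioc (0:ℝ) 1, 0 < f x)
    (hg : AEMeasurable g (volume.restrict (Set.Ioc (0:ℝ) 1)))
    (hg0 : ∀ x ∈ Set.Ioc (0:ℝ) 1, 0 < g x)
    (hgloc : ∀ x ∈ Set.Ioo (0:ℝ) 1, MeasureTheory.IntegrableOn g (Set.Ioc x 1)) :
    (∫⁻ t in Set.Ioc (0:ℝ) 1, ENNReal.ofReal ((∫ s in (0:ℝ)..t, f s) * g t))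
      = ∫⁻ u in Set.Ioc (0:ℝ) 1, ENNReal.ofReal (f u * ∫ s in u..(1:ℝ), g s) := by
  set μ := volume.restrict (Set.Ioc (0:ℝ) 1) with hμ
  have hfa : AEMeasurable f μ := hf.aestronglyMeasurable.aemeasurable
  set H : ℝ × ℝ → ℝ≥0∞ := fun z =>
    ENNReal.ofReal (f z.1) * ENNReal.ofReal (g z.2) *
      ({z : ℝ × ℝ | z.1 < z.2}.indicator 1 z) with hH
  have hHmeas : AEMeasurable H (μ.prod μ) := by
    refine (hfa.comp_fst.ennreal_ofReal.mul hg.comp_snd.ennreal_ofReal).mul ?_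
    exact (measurable_const.indicator
      (measurableSet_lt measurable_fst measurable_snd)).aemeasurable
  have haeIoc : ∀ᵐ t ∂μ, t ∈ Set.Ioc (0:ℝ) 1 := ae_restrict_mem measurableSet_Ioc
  have haeIoo : ∀ᵐ t ∂μ, t ∈ Set.Ioo (0:ℝ) 1 := by
    rw [hμ, ← MeasureTheory.Measure.restrict_congr_set Ioo_ae_eq_Ioc]
    exact ae_restrict_mem measurableSet_Ioo
  -- step 1:  LHS = iterated integral (t outer, u inner)
  have step1 : (∫⁻ t in Set.Ioc (0:ℝ) 1, ENNReal.ofReal ((∫ s in (0:ℝ)..t, f s) * g t))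
      = ∫⁻ t, (∫⁻ u, H (u, t) ∂μ) ∂μ := by
    refine lintegral_congr_ae (haeIoc.mono fun t ht => ?_)
    show ENNReal.ofReal ((∫ s in (0:ℝ)..t, f s) * g t) = ∫⁻ u, H (u, t) ∂μ
    have hinner : (fun u => H (u, t))
        = fun u => (Set.Iio t).indicator (fun u => ENNReal.ofReal (f u)) u
            * ENNReal.ofReal (g t) := by
      funext u
      by_cases h : u < t <;>
        simp [hH, Set.indicator_apply, h, Set.mem_Iio, mul_comm, mul_assoc]
    have hset : Set.Iio t ∩ Set.Ioc 0 1 = Set.Ioo 0 t := by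
      ext u
      simp only [Set.mem_inter_iff, Set.mem_Iio, Set.mem_Ioc, Set.mem_Ioo]
      constructor
      · rintro ⟨h1, h2, _⟩; exact ⟨h2, h1⟩
      · rintro ⟨h1, h2⟩; exact ⟨h2, h1, le_trans (le_of_lt h2) ht.2⟩
    have hfint : MeasureTheory.IntegrableOn f (Set.Ioo 0 t) :=
      hf.mono_set (fun u hu => ⟨hu.1, le_trans (le_of_lt hu.2) ht.2⟩)
    have hfnn : 0 ≤ᵐ[volume.restrict (Set.Ioo 0 t)] f := by
      refine (ae_restrict_mem measurableSet_Ioo).mono fun u hu => ?_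
      exact le_of_lt (hf0 u ⟨hu.1, le_trans (le_of_lt hu.2) ht.2⟩)
    have hIoo : ∫ u in Set.Ioo (0:ℝ) t, f u = ∫ s in (0:ℝ)..t, f s := by
      rw [intervalIntegral.integral_of_le (le_of_lt ht.1),
        MeasureTheory.integral_Ioc_eq_integral_Ioo]
    have hnn : 0 ≤ ∫ s in (0:ℝ)..t, f s := by
      rw [← hIoo]
      exact setIntegral_nonneg measurableSet_Ioo
        (fun u hu => le_of_lt (hf0 u ⟨hu.1, le_trans (le_of_lt hu.2) ht.2⟩))
    rw [hinner, lintegral_mul_const' _ _ ENNReal.ofReal_ne_top,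
      lintegral_indicator measurableSet_Iio, hμ,
      MeasureTheory.Measure.restrict_restrict measurableSet_Iio, hset,
      ← ofReal_integral_eq_lintegral_ofReal hfint hfnn, hIoo,
      ← ENNReal.ofReal_mul hnn]
  -- step 2: swap
  have step2 : ∫⁻ t, (∫⁻ u, H (u, t) ∂μ) ∂μ = ∫⁻ u, (∫⁻ t, H (u, t) ∂μ) ∂μ := by
    have hswap : AEMeasurable (fun z : ℝ × ℝ => H (z.2, z.1)) (μ.prod μ) := by
      have : (fun z : ℝ × ℝ => H (z.2, z.1)) = H ∘ Prod.swap := rfl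
      rw [this]
      exact hHmeas.comp_quasiMeasurePreserving
        MeasureTheory.Measure.measurePreserving_swap.quasiMeasurePreserving
    exact lintegral_lintegral_swap hswap
  -- step 3: inner integral for fixed u
  have step3 : ∫⁻ u, (∫⁻ t, H (u, t) ∂μ) ∂μ
      = ∫⁻ u in Set.Ioc (0:ℝ) 1, ENNReal.ofReal (f u * ∫ s in u..(1:ℝ), g s) := by
    refine lintegral_congr_ae (haeIoo.mono fun u hu => ?_)
    show (∫⁻ t, H (u, t) ∂μ) = ENNReal.ofReal (f u * ∫ s in u..(1:ℝ), g s)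
    have hinner : (fun t => H (u, t))
        = fun t => ENNReal.ofReal (f u)
            * (Set.Ioi u).indicator (fun t => ENNReal.ofReal (g t)) t := by
      funext t
      by_cases h : u < t <;>
        simp [hH, Set.indicator_apply, h, Set.mem_Ioi, mul_comm, mul_assoc]
    have hset : Set.Ioi u ∩ Set.Ioc 0 1 = Set.Ioc u 1 := by
      ext t
      simp only [Set.mem_inter_iff, Set.mem_Ioi, Set.mem_Ioc]
      constructor
      · rintro ⟨h1, _, h3⟩; exact ⟨h1, h3⟩
      · rintro ⟨h1, h2⟩; exact ⟨h1, lt_trans hu.1 h1, h2⟩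
    have hgint : MeasureTheory.IntegrableOn g (Set.Ioc u 1) := hgloc u hu
    have hgnn : 0 ≤ᵐ[volume.restrict (Set.Ioc u 1)] g := by
      refine (ae_restrict_mem measurableSet_Ioc).mono fun t ht => ?_
      exact le_of_lt (hg0 t ⟨lt_trans hu.1 ht.1, ht.2⟩)
    have hIoc : ∫ t in Set.Ioc u 1, g t = ∫ s in u..(1:ℝ), g s :=
      (intervalIntegral.integral_of_le (le_of_lt hu.2)).symm
    rw [hinner, lintegral_const_mul' _ _ ENNReal.ofReal_ne_top,
      lintegral_indicator measurableSet_Ioi, hμ,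
      MeasureTheory.Measure.restrict_restrict measurableSet_Ioi, hset,
      ← ofReal_integral_eq_lintegral_ofReal hgint hgnn, hIoc,
      ← ENNReal.ofReal_mul (le_of_lt (hf0 u ⟨hu.1, le_of_lt hu.2⟩))]
  rw [step1, step2, step3]
theorem greens_kernel_bound (p q : ℝ → ℝ)
    (hppos : ∀ x ∈ Set.Ioc (0 : ℝ) 1, 0 < p x)
    (hqpos : ∀ x ∈ Set.Ioc (0 : ℝ) 1, 0 < q x)
    (hpint : MeasureTheory.IntegrableOn (fun t => 1 / p t) (Set.Ioc 0 1))
    (hqloc : ∀ x ∈ Set.Ioo (0 : ℝ) 1, MeasureTheory.IntegrableOn q (Set.Ioc x 1))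
    (hC2 : MeasureTheory.IntegrableOn
      (fun x => (1 / p x) * ∫ s in x..(1 : ℝ), q s) (Set.Ioc 0 1))
    (b : ℝ → ℝ) (hb : ∀ x, b x = ∫ t in (0 : ℝ)..x, 1 / p t)
    (G : ℝ → ℝ → ℝ)
    (hG : ∀ x t, G x t =
      if x ≤ t then b x * (b 1 - b t) / b 1 else b t * (b 1 - b x) / b 1) :
    ∀ x ∈ Set.Icc (0 : ℝ) 1,
      (∫ t in (0 : ℝ)..1, G x t * q t)
        ≤ ∫ u in (0 : ℝ)..1, (1 / p u) * ∫ s in u..(1 : ℝ), q s := by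
  intro x hx
  have hf0 : ∀ u ∈ Set.Ioc (0:ℝ) 1, 0 < 1 / p u := fun u hu => by
    simp only [one_div, inv_pos]; exact hppos u hu
  -- basic facts about b
  have hbmono : ∀ s t : ℝ, 0 ≤ s → s ≤ t → t ≤ 1 → b s ≤ b t := by
    intro s t hs hst ht1
    have h1 : IntervalIntegrable (fun u => 1 / p u) volume 0 s := by
      rw [intervalIntegrable_iff_integrableOn_Ioc_of_le hs]
      exact hpint.mono_set (Set.Ioc_subset_Ioc le_rfl (le_trans hst ht1))
    have h2 : IntervalIntegrable (fun u => 1 / p u) volume s t := by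
      rw [intervalIntegrable_iff_integrableOn_Ioc_of_le hst]
      exact hpint.mono_set (Set.Ioc_subset_Ioc hs ht1)
    have hadd : b s + (∫ u in s..t, 1 / p u) = b t := by
      rw [hb, hb]
      exact intervalIntegral.integral_add_adjacent_intervals h1 h2
    have hnn : 0 ≤ ∫ u in s..t, 1 / p u := by
      rw [intervalIntegral.integral_of_le hst]
      refine MeasureTheory.setIntegral_nonneg measurableSet_Ioc fun u hu => ?_
      exact le_of_lt (hf0 u ⟨lt_of_le_of_lt hs hu.1, le_trans hu.2 ht1⟩)
    linarith
  have hb00 : b 0 = 0 := by rw [hb, intervalIntegral.integral_same]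
  have hb0 : ∀ t : ℝ, 0 ≤ t → t ≤ 1 → 0 ≤ b t := fun t h0 h1 => by
    have := hbmono 0 t le_rfl h0 h1; linarith [hb00]
  have hb1pos : 0 < b 1 := by
    rw [hb]
    refine intervalIntegral.intervalIntegral_pos_of_pos_on ?_ ?_ one_pos
    · rw [intervalIntegrable_iff_integrableOn_Ioc_of_le zero_le_one]; exact hpint
    · intro u hu; exact hf0 u ⟨hu.1, le_of_lt hu.2⟩
  -- pointwise bound 0 ≤ G x t ≤ b t for t ∈ Ioc 0 1
  have hGbd : ∀ t ∈ Set.Ioc (0:ℝ) 1, 0 ≤ G x t ∧ G x t ≤ b t := by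
    intro t ht
    have hbt0 : 0 ≤ b t := hb0 t (le_of_lt ht.1) ht.2
    have hbt1 : b t ≤ b 1 := hbmono t 1 (le_of_lt ht.1) ht.2 le_rfl
    have hbx0 : 0 ≤ b x := hb0 x hx.1 hx.2
    have hbx1 : b x ≤ b 1 := hbmono x 1 hx.1 hx.2 le_rfl
    rw [hG]
    split_ifs with h
    · have hbxt : b x ≤ b t := hbmono x t hx.1 h ht.2
      constructor
      · exact div_nonneg (mul_nonneg hbx0 (by linarith)) hb1pos.le
      · rw [mul_div_assoc]
        calc b x * ((b 1 - b t) / b 1) ≤ b t * 1 := by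
              refine mul_le_mul hbxt ?_ (div_nonneg (by linarith) hb1pos.le) hbt0
              rw [div_le_one hb1pos]; linarith
          _ = b t := mul_one _
    · constructor
      · exact div_nonneg (mul_nonneg hbt0 (by linarith)) hb1pos.le
      · rw [mul_div_assoc]
        calc b t * ((b 1 - b x) / b 1) ≤ b t * 1 := by
              refine mul_le_mul le_rfl ?_ (div_nonneg (by linarith) hb1pos.le) hbt0
              rw [div_le_one hb1pos]; linarith
          _ = b t := mul_one _
  -- measurability
  have hqae : AEMeasurable q (volume.restrict (Set.Ioc (0:ℝ) 1)) := greens_q_aemeas q hqloc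
  have hbcont : ContinuousOn b (Set.Icc (0:ℝ) 1) := by
    have hint : MeasureTheory.IntegrableOn (fun u => 1 / p u) (Set.Icc (0:ℝ) 1) :=
      (integrableOn_Icc_iff_integrableOn_Ioc).mpr hpint
    have := intervalIntegral.continuousOn_primitive hint
    refine this.congr fun t ht => ?_
    rw [hb, intervalIntegral.integral_of_le ht.1]
  have hbae : AEMeasurable b (volume.restrict (Set.Ioc (0:ℝ) 1)) := by
    have h1 : AEMeasurable b (volume.restrict (Set.Icc (0:ℝ) 1)) :=
      hbcont.aemeasurable measurableSet_Icc
    exact h1.mono_measure (Measure.restrict_mono Set.Ioc_subset_Icc_self le_rfl)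
  -- a.e. membership
  have haeIoc : ∀ᵐ t ∂(volume.restrict (Set.Ioc (0:ℝ) 1)), t ∈ Set.Ioc (0:ℝ) 1 :=
    ae_restrict_mem measurableSet_Ioc
  -- Fubini
  have hfub := greens_fubini (fun u => 1 / p u) q hpint hf0 hqae hqpos hqloc
  simp_rw [← hb] at hfub
  -- the RHS nonnegativity
  have hInn : 0 ≤ᵐ[volume.restrict (Set.Ioc (0:ℝ) 1)]
      fun u => (1 / p u) * ∫ s in u..(1:ℝ), q s := by
    refine haeIoc.mono fun u hu => ?_
    refine mul_nonneg (le_of_lt (hf0 u hu)) ?_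
    refine intervalIntegral.integral_nonneg hu.2 fun s hs => ?_
    exact le_of_lt (hqpos s ⟨lt_of_lt_of_le hu.1 hs.1, hs.2⟩)
  have hIof : ENNReal.ofReal (∫ u in Set.Ioc (0:ℝ) 1, (1 / p u) * ∫ s in u..(1:ℝ), q s)
      = ∫⁻ u in Set.Ioc (0:ℝ) 1, ENNReal.ofReal ((1 / p u) * ∫ s in u..(1:ℝ), q s) :=
    MeasureTheory.ofReal_integral_eq_lintegral_ofReal hC2 hInn
  -- integrability of b * q and value of its integral
  have hbqnn : 0 ≤ᵐ[volume.restrict (Set.Ioc (0:ℝ) 1)] fun t => b t * q t := by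
    refine haeIoc.mono fun t ht => ?_
    exact mul_nonneg (hb0 t (le_of_lt ht.1) ht.2) (le_of_lt (hqpos t ht))
  have hbq_int : MeasureTheory.Integrable (fun t => b t * q t)
      (volume.restrict (Set.Ioc (0:ℝ) 1)) := by
    refine ⟨(hbae.mul hqae).aestronglyMeasurable, ?_⟩
    rw [MeasureTheory.hasFiniteIntegral_iff_ofReal hbqnn, hfub, ← hIof]
    exact ENNReal.ofReal_lt_top
  have hbq_eq : (∫ t in Set.Ioc (0:ℝ) 1, b t * q t)
      = ∫ u in Set.Ioc (0:ℝ) 1, (1 / p u) * ∫ s in u..(1:ℝ), q s := by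
    have h1 : ENNReal.ofReal (∫ t in Set.Ioc (0:ℝ) 1, b t * q t)
        = ENNReal.ofReal (∫ u in Set.Ioc (0:ℝ) 1, (1 / p u) * ∫ s in u..(1:ℝ), q s) := by
      rw [MeasureTheory.ofReal_integral_eq_lintegral_ofReal hbq_int hbqnn, hfub, ← hIof]
    exact (ENNReal.ofReal_eq_ofReal_iff
      (MeasureTheory.integral_nonneg_of_ae hbqnn)
      (MeasureTheory.integral_nonneg_of_ae hInn)).mp h1
  -- integrability of G x · q and comparison
  have hGae : AEMeasurable (fun t => G x t * q t) (volume.restrict (Set.Ioc (0:ℝ) 1)) := by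
    have hA : AEMeasurable (fun t => b x * (b 1 - b t) / b 1)
        (volume.restrict (Set.Ioc (0:ℝ) 1)) :=
      (aemeasurable_const.mul (aemeasurable_const.sub hbae)).div aemeasurable_const
    have hB : AEMeasurable (fun t => b t * (b 1 - b x) / b 1)
        (volume.restrict (Set.Ioc (0:ℝ) 1)) :=
      (hbae.mul aemeasurable_const).div aemeasurable_const
    have hpw : (fun t => G x t)
        = fun t => (Set.Ici x).indicator (fun t => b x * (b 1 - b t) / b 1) t
            + (Set.Ici x)ᶜ.indicator (fun t => b t * (b 1 - b x) / b 1) t := by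
      funext t
      rw [hG]
      by_cases h : x ≤ t
      · simp [Set.indicator_apply, h]
      · simp [Set.indicator_apply, h, not_le.mp h]
    have : AEMeasurable (fun t => G x t) (volume.restrict (Set.Ioc (0:ℝ) 1)) := by
      rw [hpw]
      exact (hA.indicator measurableSet_Ici).add
        (hB.indicator measurableSet_Ici.compl)
    exact this.mul hqae
  have hle : (fun t => G x t * q t) ≤ᵐ[volume.restrict (Set.Ioc (0:ℝ) 1)]
      fun t => b t * q t := by
    refine haeIoc.mono fun t ht => ?_
    exact mul_le_mul_of_nonneg_right (hGbd t ht).2 (le_of_lt (hqpos t ht))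
  have hbound : ∀ᵐ t ∂(volume.restrict (Set.Ioc (0:ℝ) 1)), ‖G x t * q t‖ ≤ b t * q t := by
    refine haeIoc.mono fun t ht => ?_
    rw [Real.norm_eq_abs, abs_of_nonneg (mul_nonneg (hGbd t ht).1 (le_of_lt (hqpos t ht)))]
    exact mul_le_mul_of_nonneg_right (hGbd t ht).2 (le_of_lt (hqpos t ht))
  have hGq_int : MeasureTheory.Integrable (fun t => G x t * q t)
      (volume.restrict (Set.Ioc (0:ℝ) 1)) :=
    hbq_int.mono' hGae.aestronglyMeasurable hbound
  calc (∫ t in (0:ℝ)..1, G x t * q t) = ∫ t in Set.Ioc (0:ℝ) 1, G x t * q t :=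
        intervalIntegral.integral_of_le zero_le_one
    _ ≤ ∫ t in Set.Ioc (0:ℝ) 1, b t * q t :=
        MeasureTheory.integral_mono_ae hGq_int hbq_int hle
    _ = ∫ u in Set.Ioc (0:ℝ) 1, (1 / p u) * ∫ s in u..(1:ℝ), q s := hbq_eq
    _ = ∫ u in (0:ℝ)..1, (1 / p u) * ∫ s in u..(1:ℝ), q s :=
        (intervalIntegral.integral_of_le zero_le_one).symm
end
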